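/- Let Φ∈ℝ^{M×N} be K^t-disjunct and let s∈ℝ^N be supported on a set K with |K|≤K. Let y = |Φs|² + w (entrywise squared absolute value) with ‖w‖₀ ≤ K₀ < t/2. Then for every index n∉K, the number of rows m with Φ_{m,n}≠0 and y_m = 0 is at least t+1−K₀. -/

import Mathlib

/-!
Disjunctness applied to the support `𝒦` of `s` yields `t + 1` rows in which column `n` is
nonzero while every column of `𝒦` vanishes. In those rows `(Φ s)_m = 0`, so `y_m = w_m`, and at
most `K₀` of them can carry a nonzero outlier.
-/

open Finset

theorem Matrix.mulVec_apply_eq_zero_of_forall_mem_support {R m n : Type*} [Fintype n]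
    [NonUnitalNonAssocSemiring R] (A : Matrix m n R) {v : n → R} {S : Finset n}
    (hv : ∀ j, v j ≠ 0 → j ∈ S) {i : m} (hA : ∀ k ∈ S, A i k = 0) : A.mulVec v i = 0 := by
  refine Finset.sum_eq_zero fun k _ => ?_
  by_cases hk : v k = 0
  · simp [hk]
  · simp [hA k (hv k hk)]

theorem Finset.sub_le_card_sdiff_of_le_card {α : Type*} [DecidableEq α] {s u : Finset α}
    {a b : ℕ} (hs : a ≤ #s) (hu : #u ≤ b) : a - b ≤ #(s \ u) :=
  (tsub_le_tsub hs hu).trans (le_card_sdiff u s)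

open Classical in
theorem stmt_1_general (M N K t K₀ : ℕ) (Φ : Matrix (Fin M) (Fin N) ℝ)
    (hdisj : ∀ n : Fin N, ∀ S : Finset (Fin N), n ∉ S → S.card ≤ K →
      t + 1 ≤ (Finset.univ.filter (fun m => Φ m n ≠ 0 ∧ ∀ k ∈ S, Φ m k = 0)).card)
    (s : Fin N → ℝ) (𝒦 : Finset (Fin N)) (hsupp : ∀ j, s j ≠ 0 → j ∈ 𝒦)
    (hcard : 𝒦.card ≤ K)
    (w y : Fin M → ℝ)
    (hw : (Finset.univ.filter (fun m => w m ≠ 0)).card ≤ K₀)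
    (hy : ∀ m, y m = (Matrix.mulVec Φ s m) ^ 2 + w m)
    (n : Fin N) (hn : n ∉ 𝒦) :
    t + 1 - K₀ ≤ (Finset.univ.filter (fun m => Φ m n ≠ 0 ∧ y m = 0)).card := by
  have hsub : univ.filter (fun m => Φ m n ≠ 0 ∧ ∀ k ∈ 𝒦, Φ m k = 0) \ univ.filter (w · ≠ 0)
      ⊆ univ.filter (fun m => Φ m n ≠ 0 ∧ y m = 0) := by
    intro m hm
    simp only [mem_sdiff, mem_filter, mem_univ, true_and, not_not] at hm ⊢
    obtain ⟨⟨hΦn, hzero⟩, hwm⟩ := hm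
    refine ⟨hΦn, ?_⟩
    rw [hy m, Φ.mulVec_apply_eq_zero_of_forall_mem_support hsupp hzero, hwm]
    ring
  exact (sub_le_card_sdiff_of_le_card (hdisj n 𝒦 hn hcard) hw).trans (card_le_card hsub)

open Classical in
/-- For a `K^t`-disjunct sensing matrix, a `K`-sparse signal, and
measurements `y = |Φs|² + w` with at most `K₀ < t/2` outliers, every inactive index
`n ∉ 𝒦` has at least `t+1-K₀` rows `m` with `Φ m n ≠ 0` and `y m = 0`. -/
theorem stmt_1 (M N K t K₀ : ℕ) (Φ : Matrix (Fin M) (Fin N) ℝ)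
    (hdisj : ∀ n : Fin N, ∀ S : Finset (Fin N), n ∉ S → S.card ≤ K →
      t + 1 ≤ (Finset.univ.filter (fun m => Φ m n ≠ 0 ∧ ∀ k ∈ S, Φ m k = 0)).card)
    (s : Fin N → ℝ) (𝒦 : Finset (Fin N)) (hsupp : ∀ j, s j ≠ 0 → j ∈ 𝒦)
    (hcard : 𝒦.card ≤ K)
    (w y : Fin M → ℝ)
    (hw : (Finset.univ.filter (fun m => w m ≠ 0)).card ≤ K₀)
    (hK₀ : 2 * K₀ < t)
    (hy : ∀ m, y m = (Matrix.mulVec Φ s m) ^ 2 + w m)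
    (n : Fin N) (hn : n ∉ 𝒦) :
    t + 1 - K₀ ≤ (Finset.univ.filter (fun m => Φ m n ≠ 0 ∧ y m = 0)).card :=
  stmt_1_general M N K t K₀ Φ hdisj s 𝒦 hsupp hcard w y hw hy n hn
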